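/- arXiv:2002.02051 — 5 statements merged into one kernel-verified Lean document; each statement's English description precedes it below -/
import Mathlib

section
/- Let V be a finite-dimensional real inner product space with a symmetric positive definite operator A, and let V = Σ_i V_i be a (not necessarily direct) decomposition into subspaces with inclusions I_i : V_i → V. Define A_i on V_i by ⟨A_i u_i, v_i⟩ = ⟨A I_i u_i, I_i v_i⟩ and the additive Schwarz preconditioner D by D^{-1} = Σ_i I_i A_i^{-1} I_i^*. Then for every u ∈ V, ⟨D u, u⟩ equals the infimum over all decompositions u = Σ_i u_i with u_i ∈ V_i of Σ_i ⟨A_i u_i, u_i⟩. -/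
open scoped RealInnerProductSpace

/-!
The decomposition `u_i⋆ = A_i⁻¹ I_i^* D u` satisfies the local Galerkin relations
`⟨A u_i⋆, w⟩ = ⟨D u, w⟩` for `w ∈ V_i`; summing them shows that its energy is `⟨D u, u⟩`.
For any other decomposition `u = Σ w_i` the same relations give `⟨D u, u⟩ = Σ ⟨A u_i⋆, w_i⟩`,
and `2⟨A x, y⟩ ≤ ⟨A x, x⟩ + ⟨A y, y⟩` bounds this by half the sum of both energies.
So `u⋆` is a minimising decomposition and the infimum is attained at `⟨D u, u⟩`.
-/

section AdditiveSchwarz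

variable {V : Type*} [NormedAddCommGroup V] [InnerProductSpace ℝ V]

theorem LinearMap.IsPositive.two_mul_inner_le {A : V →ₗ[ℝ] V} (hA : A.IsPositive) (x y : V) :
    2 * ⟪A x, y⟫ ≤ ⟪A x, x⟫ + ⟪A y, y⟫ := by
  have hsub := hA.inner_nonneg_left (x - y)
  have hyx : ⟪A y, x⟫ = ⟪A x, y⟫ := by rw [hA.isSymmetric y x, real_inner_comm]
  rw [map_sub, inner_sub_left, inner_sub_right, inner_sub_right, hyx] at hsub
  linarith

theorem inner_apply_localSolve_eq {K : Submodule ℝ V} [K.HasOrthogonalProjection]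
    (A : V →ₗ[ℝ] V) (B C : K →ₗ[ℝ] K) (hB : ∀ x y : K, ⟪(B x : V), (y : V)⟫ = ⟪A x, y⟫)
    (hBC : B ∘ₗ C = LinearMap.id) (f : V) {w : V} (hw : w ∈ K) :
    ⟪A (C (K.orthogonalProjectionOnto f)), w⟫ = ⟪f, w⟫ := by
  rw [← hB _ ⟨w, hw⟩, ← LinearMap.comp_apply, hBC, LinearMap.id_apply]
  exact K.inner_orthogonalProjectionOnto_eq_of_mem_right ⟨w, hw⟩ f

variable {ι : Type*} [Fintype ι]

def decompositionEnergies (Vsub : ι → Submodule ℝ V) (A : V →ₗ[ℝ] V) (u : V) : Set ℝ :=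
  { s | ∃ w : ι → V, (∀ i, w i ∈ Vsub i) ∧ (∑ i, w i) = u ∧ s = ∑ i, ⟪A (w i), w i⟫ }

theorem isLeast_decompositionEnergies {Vsub : ι → Submodule ℝ V} {A : V →ₗ[ℝ] V}
    (hA : A.IsPositive) {u f : V} (w : ι → V) (hw : ∀ i, w i ∈ Vsub i) (hsum : ∑ i, w i = u)
    (hgalerkin : ∀ i, ∀ v ∈ Vsub i, ⟪A (w i), v⟫ = ⟪f, v⟫) :
    IsLeast (decompositionEnergies Vsub A u) ⟪f, u⟫ := by
  have henergy : ∑ i, ⟪A (w i), w i⟫ = ⟪f, u⟫ := by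
    rw [← hsum, inner_sum]
    exact Finset.sum_congr rfl fun i _ => hgalerkin i _ (hw i)
  refine ⟨⟨w, hw, hsum, henergy.symm⟩, ?_⟩
  rintro _ ⟨v, hv, hvsum, rfl⟩
  have hcross : ⟪f, u⟫ = ∑ i, ⟪A (w i), v i⟫ := by
    rw [← hvsum, inner_sum]
    exact Finset.sum_congr rfl fun i _ => (hgalerkin i _ (hv i)).symm
  have hamgm : ∑ i, 2 * ⟪A (w i), v i⟫ ≤ ∑ i, (⟪A (w i), w i⟫ + ⟪A (v i), v i⟫) :=
    Finset.sum_le_sum fun i _ => hA.two_mul_inner_le _ _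
  rw [← Finset.mul_sum, Finset.sum_add_distrib, henergy, ← hcross] at hamgm
  linarith

end AdditiveSchwarz

theorem stmt0_general
    {V : Type*} [NormedAddCommGroup V] [InnerProductSpace ℝ V] [FiniteDimensional ℝ V]
    {ι : Type*} [Fintype ι]
    (Vsub : ι → Submodule ℝ V)
    (A : V →ₗ[ℝ] V)
    (hAsym : ∀ u v : V, ⟪A u, v⟫ = ⟪u, A v⟫)
    (hApos : ∀ u : V, u ≠ 0 → 0 < ⟪A u, u⟫)
    -- `B i` is the restriction `A_i` of `A` to the subspace `V_i`
    (B C : ∀ i, Vsub i →ₗ[ℝ] Vsub i)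
    (hB : ∀ i (x y : Vsub i), ⟪((B i x : V)), (y : V)⟫ = ⟪A (x : V), (y : V)⟫)
    (hBC : ∀ i, (B i).comp (C i) = LinearMap.id)
    (D : V →ₗ[ℝ] V)
    -- `D⁻¹ = Σ_i I_i A_i⁻¹ I_i^*`
    (hDinv : ∀ u : V, ∑ i, ((C i ((Vsub i).orthogonalProjection (D u)) : V)) = u)
    (u : V) :
    ⟪D u, u⟫ =
      sInf { s : ℝ | ∃ w : ι → V, (∀ i, w i ∈ Vsub i) ∧ (∑ i, w i) = u ∧
        s = ∑ i, ⟪A (w i), w i⟫ } := by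
  have hA : A.IsPositive := by
    refine (A.isPositive_iff).mpr ⟨hAsym, fun z => ?_⟩
    rcases eq_or_ne z 0 with rfl | hz
    · simp
    · exact (hApos z hz).le
  have hleast : IsLeast (decompositionEnergies Vsub A u) ⟪D u, u⟫ :=
    isLeast_decompositionEnergies hA (fun i => C i ((Vsub i).orthogonalProjectionOnto (D u)))
      (fun i => Submodule.coe_mem _) (hDinv u)
      fun i _ hv => inner_apply_localSolve_eq A (B i) (C i) (hB i) (hBC i) (D u) hv
  exact hleast.csInf_eq.symm

/-- the additive Schwarz preconditioner `D`, defined through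
`D⁻¹ = Σ_i I_i A_i⁻¹ I_i^*` (where `I_i^*` is the orthogonal projection onto `V_i`),
satisfies `⟨D u, u⟩ = inf { Σ_i ⟨A_i u_i, u_i⟩ : u = Σ_i u_i, u_i ∈ V_i }`. -/
theorem stmt0
    {V : Type*} [NormedAddCommGroup V] [InnerProductSpace ℝ V] [FiniteDimensional ℝ V]
    {ι : Type*} [Fintype ι]
    (Vsub : ι → Submodule ℝ V)
    (hspan : (⨆ i, Vsub i) = ⊤)
    (A : V →ₗ[ℝ] V)
    (hAsym : ∀ u v : V, ⟪A u, v⟫ = ⟪u, A v⟫)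
    (hApos : ∀ u : V, u ≠ 0 → 0 < ⟪A u, u⟫)
    -- `B i` is the restriction `A_i` of `A` to the subspace `V_i`
    (B C : ∀ i, Vsub i →ₗ[ℝ] Vsub i)
    (hB : ∀ i (x y : Vsub i), ⟪((B i x : V)), (y : V)⟫ = ⟪A (x : V), (y : V)⟫)
    -- `C i = A_i⁻¹`
    (hCB : ∀ i, (C i).comp (B i) = LinearMap.id)
    (hBC : ∀ i, (B i).comp (C i) = LinearMap.id)
    (D : V →ₗ[ℝ] V)
    (hDsym : ∀ u v : V, ⟪D u, v⟫ = ⟪u, D v⟫)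
    -- `D⁻¹ = Σ_i I_i A_i⁻¹ I_i^*`
    (hDinv : ∀ u : V, ∑ i, ((C i ((Vsub i).orthogonalProjection (D u)) : V)) = u)
    (u : V) :
    ⟪D u, u⟫ =
      sInf { s : ℝ | ∃ w : ι → V, (∀ i, w i ∈ Vsub i) ∧ (∑ i, w i) = u ∧
        s = ∑ i, ⟪A (w i), w i⟫ } :=
  stmt0_general Vsub A hAsym hApos B C hB hBC D hDinv u
end

section
/- Let V, V_h be real Hilbert spaces with V_h ⊆ V finite-dimensional, Q_h a finite-dimensional Hilbert space, and b : V × Q_h → ℝ a bounded bilinear form such that the pair (V_h, Q_h) satisfies the discrete inf-sup condition inf_{q_h ∈ Q_h} sup_{v_h ∈ V_h} b(v_h, q_h)/(‖v_h‖ ‖q_h‖) ≥ β > 0. Then there exists a bounded linear Fortin operator I_h : V → V_h such that b(I_h v, q_h) = b(v, q_h) for all v ∈ V and q_h ∈ Q_h, I_h v_h = v_h for all v_h ∈ V_h, and ‖I_h‖ is bounded in terms of β and the norm of b. -/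
/-!
Let `S : V → Q_h` be the Riesz representative of `b`, so `⟪S v, q⟫ = b v q`, and `T = S|_{V_h}`.
The inf-sup condition says exactly that `‖T† q‖ ≥ β ‖q‖`, so the Gram operator `T T†` is
invertible and `R = T† (T T†)⁻¹` is a right inverse of `T` with `‖R‖ ≤ 1 / β`; then `R ∘ S`
is a correction `V → V_h` of norm at most `M / β` that preserves `b`. With `P` the orthogonal
projection onto `V_h`, the operator `P + R S (1 - P)` preserves `b`, is the identity on `V_h`
and has norm at most `1 + M / β`.
-/

open InnerProductSpace

theorem LinearMap.exists_inner_apply_eq_and_norm_le {E F : Type*} [SeminormedAddCommGroup E]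
    [Module ℝ E] [NormedAddCommGroup F] [InnerProductSpace ℝ F] [FiniteDimensional ℝ F]
    (b : E →ₗ[ℝ] F →ₗ[ℝ] ℝ) {M : ℝ} (hM : 0 ≤ M) (hb : ∀ v q, |b v q| ≤ M * ‖v‖ * ‖q‖) :
    ∃ S : E →ₗ[ℝ] F, (∀ v q, ⟪S v, q⟫_ℝ = b v q) ∧ ∀ v, ‖S v‖ ≤ M * ‖v‖ := by
  let riesz : F ≃ₗ[ℝ] F →ₗ[ℝ] ℝ :=
    (toDual ℝ F).toLinearEquiv ≪≫ₗ LinearMap.toContinuousLinearMap.symm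
  refine ⟨riesz.symm.toLinearMap ∘ₗ b, fun v q => toDual_symm_apply, fun v => ?_⟩
  calc ‖riesz.symm (b v)‖ = ‖LinearMap.toContinuousLinearMap (b v)‖ := (toDual ℝ F).symm.norm_map _
    _ ≤ M * ‖v‖ := ContinuousLinearMap.opNorm_le_bound _ (by positivity) (hb v)

section GramInverse

variable {E F : Type*} [NormedAddCommGroup E] [InnerProductSpace ℝ E] [FiniteDimensional ℝ E]
  [NormedAddCommGroup F] [InnerProductSpace ℝ F] [FiniteDimensional ℝ F]

theorem LinearMap.mul_norm_le_norm_adjoint_apply {T : E →ₗ[ℝ] F} {β : ℝ}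
    (h : ∀ y, y ≠ 0 → ∃ x, x ≠ 0 ∧ β * ‖x‖ * ‖y‖ ≤ ⟪T x, y⟫_ℝ) (y : F) :
    β * ‖y‖ ≤ ‖adjoint T y‖ := by
  rcases eq_or_ne y 0 with rfl | hy
  · simp
  obtain ⟨x, hx, hxy⟩ := h y hy
  refine le_of_mul_le_mul_left ?_ (norm_pos_iff.mpr hx)
  calc ‖x‖ * (β * ‖y‖) = β * ‖x‖ * ‖y‖ := by ring
    _ ≤ ⟪x, adjoint T y⟫_ℝ := by rwa [adjoint_inner_right]
    _ ≤ ‖x‖ * ‖adjoint T y‖ := real_inner_le_norm _ _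

theorem LinearMap.injective_comp_adjoint {T : E →ₗ[ℝ] F} (h : Function.Injective (adjoint T)) :
    Function.Injective (T ∘ₗ adjoint T) := by
  rw [← LinearMap.ker_eq_bot, LinearMap.ker_eq_bot']
  intro y hy
  apply h
  rw [map_zero, ← inner_self_eq_zero (𝕜 := ℝ), adjoint_inner_right, ← LinearMap.comp_apply, hy,
    inner_zero_left]

/-- The minimal-norm right inverse `T† (T T†)⁻¹` has norm at most `1 / β`. -/
theorem LinearMap.exists_rightInverse_of_mul_norm_le_norm_adjoint (T : E →ₗ[ℝ] F) {β : ℝ}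
    (hβ : 0 < β) (hT : ∀ y, β * ‖y‖ ≤ ‖adjoint T y‖) :
    ∃ R : F →ₗ[ℝ] E, (∀ y, T (R y) = y) ∧ ∀ y, β * ‖R y‖ ≤ ‖y‖ := by
  have hinj : Function.Injective (adjoint T) := by
    refine (injective_iff_map_eq_zero _).mpr fun y hy => norm_eq_zero.mp ?_
    have := hT y
    rw [hy, norm_zero] at this
    exact le_antisymm (nonpos_of_mul_nonpos_right this hβ) (norm_nonneg y)
  let G := LinearEquiv.ofInjectiveEndo _ (injective_comp_adjoint hinj)
  refine ⟨adjoint T ∘ₗ G.symm.toLinearMap, G.apply_symm_apply, fun y => ?_⟩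
  set q := G.symm y
  show β * ‖adjoint T q‖ ≤ ‖y‖
  have hq : T (adjoint T q) = y := G.apply_symm_apply y
  -- `‖T† q‖² = ⟪q, T T† q⟫ = ⟪q, y⟫`
  have hsq : ‖adjoint T q‖ * ‖adjoint T q‖ ≤ ‖q‖ * ‖y‖ := by
    rw [← real_inner_self_eq_norm_mul_norm, adjoint_inner_left, hq]
    exact real_inner_le_norm _ _
  rcases (norm_nonneg (adjoint T q)).eq_or_lt with h0 | hpos
  · rw [← h0, mul_zero]
    exact norm_nonneg y
  refine le_of_mul_le_mul_left ?_ hpos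
  calc ‖adjoint T q‖ * (β * ‖adjoint T q‖) = β * (‖adjoint T q‖ * ‖adjoint T q‖) := by ring
    _ ≤ β * ‖q‖ * ‖y‖ := by rw [mul_assoc]; gcongr
    _ ≤ ‖adjoint T q‖ * ‖y‖ := by gcongr; exact hT q

end GramInverse

theorem exists_correction_of_infSup {V Q : Type*} [NormedAddCommGroup V] [InnerProductSpace ℝ V]
    [NormedAddCommGroup Q] [InnerProductSpace ℝ Q] [FiniteDimensional ℝ Q]
    (Vh : Submodule ℝ V) [FiniteDimensional ℝ Vh] (b : V →ₗ[ℝ] Q →ₗ[ℝ] ℝ) {M β : ℝ}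
    (hM : 0 ≤ M) (hβ : 0 < β) (hbbdd : ∀ v q, |b v q| ≤ M * ‖v‖ * ‖q‖)
    (hinfsup : ∀ q : Q, q ≠ 0 → ∃ v : V, v ∈ Vh ∧ v ≠ 0 ∧ β * ‖v‖ * ‖q‖ ≤ b v q) :
    ∃ w : V →L[ℝ] Vh, (∀ u, b (w u) = b u) ∧ ‖w‖ ≤ M / β := by
  obtain ⟨S, hS, hSle⟩ := b.exists_inner_apply_eq_and_norm_le hM hbbdd
  let T := S ∘ₗ Vh.subtype
  have hT : ∀ q, β * ‖q‖ ≤ ‖LinearMap.adjoint T q‖ := LinearMap.mul_norm_le_norm_adjoint_apply fun q hq => by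
    obtain ⟨v, hv, hv0, hvq⟩ := hinfsup q hq
    exact ⟨⟨v, hv⟩, by simpa using hv0, by simpa [T, hS] using hvq⟩
  obtain ⟨R, hTR, hR⟩ := T.exists_rightInverse_of_mul_norm_le_norm_adjoint hβ hT
  have hRS : ∀ u, ‖R (S u)‖ ≤ M / β * ‖u‖ := fun u => by
    rw [div_mul_eq_mul_div, le_div_iff₀ hβ, mul_comm]
    exact (hR (S u)).trans (hSle u)
  refine ⟨(R ∘ₗ S).mkContinuous (M / β) hRS, fun u => LinearMap.ext fun q => ?_,
    LinearMap.mkContinuous_norm_le _ (by positivity) hRS⟩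
  rw [← hS, ← hS]
  exact congrArg (⟪·, q⟫_ℝ) (hTR (S u))

theorem Submodule.exists_projection_of_correction {V W : Type*} [NormedAddCommGroup V]
    [InnerProductSpace ℝ V] [AddCommGroup W] [Module ℝ W] (K : Submodule ℝ V)
    [K.HasOrthogonalProjection] (f : V →ₗ[ℝ] W) (w : V →L[ℝ] K) {C : ℝ}
    (hfw : ∀ u, f (w u) = f u) (hw : ‖w‖ ≤ C) :
    ∃ I : V →L[ℝ] V, (∀ v, I v ∈ K) ∧ (∀ v, f (I v) = f v) ∧ (∀ v ∈ K, I v = v) ∧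
      ‖I‖ ≤ 1 + C := by
  have hC : 0 ≤ C := (norm_nonneg w).trans hw
  let I : V →L[ℝ] V := K.starProjection + K.subtypeL ∘L w ∘L Kᗮ.starProjection
  have hI : ∀ v, I v = K.starProjection v + w (Kᗮ.starProjection v) := fun v => rfl
  refine ⟨I, fun v => ?_, fun v => ?_, fun v hv => ?_, ?_⟩
  · rw [hI]
    exact K.add_mem (K.starProjection_apply_mem v) (w _).2
  · rw [hI, map_add, hfw, ← map_add, K.starProjection_add_starProjection_orthogonal]
  · rw [hI, K.starProjection_orthogonal_apply_eq_zero hv, map_zero, Submodule.coe_zero, add_zero,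
      K.starProjection_eq_self_iff.mpr hv]
  · refine ContinuousLinearMap.opNorm_le_bound _ (by positivity) fun v => ?_
    calc ‖I v‖ ≤ ‖K.starProjection v‖ + ‖w (Kᗮ.starProjection v)‖ := norm_add_le _ _
      _ ≤ ‖v‖ + C * ‖v‖ := by
        gcongr
        · exact K.norm_starProjection_apply_le v
        · exact (w.le_of_opNorm_le hw _).trans
            (mul_le_mul_of_nonneg_left (Kᗮ.norm_starProjection_apply_le v) hC)
      _ = (1 + C) * ‖v‖ := by ring

theorem stmt6_general
    {V Q : Type*}
    [NormedAddCommGroup V] [InnerProductSpace ℝ V]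
    [NormedAddCommGroup Q] [InnerProductSpace ℝ Q] [FiniteDimensional ℝ Q]
    (Vh : Submodule ℝ V) [FiniteDimensional ℝ Vh]
    (b : V →ₗ[ℝ] Q →ₗ[ℝ] ℝ)
    (M β : ℝ) (hM : 0 < M) (hβ : 0 < β)
    (hbbdd : ∀ (v : V) (q : Q), |b v q| ≤ M * ‖v‖ * ‖q‖)
    (hinfsup : ∀ q : Q, q ≠ 0 → ∃ v : V, v ∈ Vh ∧ v ≠ 0 ∧ β * ‖v‖ * ‖q‖ ≤ b v q) :
    ∃ Ih : V →L[ℝ] V,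
      (∀ v : V, Ih v ∈ Vh) ∧
      (∀ (v : V) (q : Q), b (Ih v) q = b v q) ∧
      (∀ v ∈ Vh, Ih v = v) ∧
      ‖Ih‖ ≤ 1 + M / β := by
  obtain ⟨w, hbw, hw⟩ := exists_correction_of_infSup Vh b hM.le hβ hbbdd hinfsup
  obtain ⟨Ih, hmem, hb, hid, hnorm⟩ := Vh.exists_projection_of_correction b w hbw hw
  exact ⟨Ih, hmem, fun v q => LinearMap.congr_fun (hb v) q, hid, hnorm⟩

/-- existence of a Fortin operator.  If the pair `(V_h, Q_h)` is
discretely inf-sup stable with constant `β` for the bounded bilinear form `b`,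
then there is a bounded linear operator `I_h : V → V_h` preserving `b` in the
second argument, restricting to the identity on `V_h`, with norm bounded in
terms of `β` and the bound `M` of `b`. -/
theorem stmt6
    {V Q : Type*}
    [NormedAddCommGroup V] [InnerProductSpace ℝ V] [CompleteSpace V]
    [NormedAddCommGroup Q] [InnerProductSpace ℝ Q] [FiniteDimensional ℝ Q]
    (Vh : Submodule ℝ V) [FiniteDimensional ℝ Vh]
    (b : V →ₗ[ℝ] Q →ₗ[ℝ] ℝ)
    (M β : ℝ) (hM : 0 < M) (hβ : 0 < β)
    (hbbdd : ∀ (v : V) (q : Q), |b v q| ≤ M * ‖v‖ * ‖q‖)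
    (hinfsup : ∀ q : Q, q ≠ 0 → ∃ v : V, v ∈ Vh ∧ v ≠ 0 ∧ β * ‖v‖ * ‖q‖ ≤ b v q) :
    ∃ Ih : V →L[ℝ] V,
      (∀ v : V, Ih v ∈ Vh) ∧
      (∀ (v : V) (q : Q), b (Ih v) q = b v q) ∧
      (∀ v ∈ Vh, Ih v = v) ∧
      ‖Ih‖ ≤ 1 + M / β :=
  stmt6_general Vh b M β hM hβ hbbdd hinfsup
end

section
/- Gluing of Fortin operators: Let V, V_h ⊆ V be Hilbert spaces with V_h finite-dimensional, Q_h a finite-dimensional space with decomposition Q_h = Q̃_h ⊕ (⊕_K Q_h(K)) (orthogonal direct sum over a finite index set of 'macro cells' K), and b : V × Q_h → ℝ bilinear and bounded. Suppose: (a) there is a bounded linear operator Ĩ_h : V → V_h with Ĩ_h v_h = v_h for v_h ∈ V_h and b(Ĩ_h v, q̃) = b(v, q̃) for all q̃ ∈ Q̃_h; (b) for each K there are subspaces V_{h,0}(K) ⊆ V_h, restriction maps r_K : V → V(K), and bounded linear operators I_h^K : V(K) → V_{h,0}(K) with I_h^K w_h = w_h for w_h ∈ V_{h,0}(K) and b-preservation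 against Q_h(K); (c) b(w, q̃) = 0 for all w ∈ V_{h,0}(K) and q̃ ∈ Q̃_h, and b(w, q') = 0 for w ∈ V_{h,0}(K), q' ∈ Q_h(K') with K' ≠ K. Then I_h(v) := Ĩ_h v + Σ_K ι_K I_h^K (r_K(v − Ĩ_h v)) is a bounded linear operator V → V_h with I_h v_h = v_h for all v_h ∈ V_h and b(I_h v, q) = b(v, q) for all q ∈ Q_h and v ∈ V. -/
/-!
The property "`T` preserves `b` against `q`" is linear in `q`, so it suffices to check it on
`Q̃_h` and on each `Q_h(K)`. Against `q̃ ∈ Q̃_h` the local corrections are invisible and `Ĩ_h`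
preserves `b`. Against `q ∈ Q_h(K)` only the correction on `K` is visible, and it replaces
`b(Ĩ_h v, q)` by `b(Ĩ_h v, q) + b(v − Ĩ_h v, q) = b(v, q)`.
-/

namespace FortinGluing

variable {R V Q M ι : Type*} [CommRing R] [AddCommGroup V] [Module R V]
  [AddCommGroup Q] [Module R Q] [AddCommGroup M] [Module R M]

def fortinSubmodule (b : V →ₗ[R] Q →ₗ[R] M) (T : V →ₗ[R] V) : Submodule R Q :=
  LinearMap.ker (b ∘ₗ T - b).flip

theorem mem_fortinSubmodule {b : V →ₗ[R] Q →ₗ[R] M} {T : V →ₗ[R] V} {q : Q} :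
    q ∈ fortinSubmodule b T ↔ ∀ v, b (T v) q = b v q := by
  simp only [fortinSubmodule, LinearMap.mem_ker, LinearMap.ext_iff, LinearMap.flip_apply,
    LinearMap.sub_apply, LinearMap.comp_apply, LinearMap.zero_apply, sub_eq_zero]

variable [Fintype ι]

def glue (It : V →ₗ[R] V) (J : ι → V →ₗ[R] V) : V →ₗ[R] V :=
  It + ∑ k, J k ∘ₗ (LinearMap.id - It)

variable {It : V →ₗ[R] V} {J : ι → V →ₗ[R] V}

theorem glue_apply (v : V) : glue It J v = It v + ∑ k, J k (v - It v) := by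
  simp [glue]

theorem glue_mem {W : Submodule R V} (hIt : ∀ v, It v ∈ W) (hJ : ∀ k v, J k v ∈ W) (v : V) :
    glue It J v ∈ W := by
  rw [glue_apply]
  exact W.add_mem (hIt v) (W.sum_mem fun k _ => hJ k _)

theorem glue_apply_of_apply_eq_self {v : V} (hv : It v = v) : glue It J v = v := by
  simp [glue_apply, hv]

variable {b : V →ₗ[R] Q →ₗ[R] M}

theorem le_fortinSubmodule_glue_of_macro {P : Submodule R Q} (hIt : P ≤ fortinSubmodule b It)
    (hJ : ∀ k v, ∀ q ∈ P, b (J k v) q = 0) : P ≤ fortinSubmodule b (glue It J) := by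
  intro q hq
  rw [mem_fortinSubmodule]
  intro v
  simp only [glue_apply, map_add, map_sum, LinearMap.add_apply, LinearMap.sum_apply,
    hJ _ _ q hq, Finset.sum_const_zero, add_zero]
  exact mem_fortinSubmodule.1 (hIt hq) v

theorem le_fortinSubmodule_glue_of_local {P : Submodule R Q} (k : ι)
    (hJ : P ≤ fortinSubmodule b (J k)) (hcross : ∀ l ≠ k, ∀ v, ∀ q ∈ P, b (J l v) q = 0) :
    P ≤ fortinSubmodule b (glue It J) := by
  intro q hq
  rw [mem_fortinSubmodule]
  intro v
  have hsum : ∑ l, b (J l (v - It v)) q = b (J k (v - It v)) q :=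
    Finset.sum_eq_single k (fun l _ hl => hcross l hl _ q hq) (by simp)
  rw [glue_apply, map_add, map_sum, LinearMap.add_apply, LinearMap.sum_apply, hsum,
    mem_fortinSubmodule.1 (hJ hq), map_sub, LinearMap.sub_apply, add_sub_cancel]

end FortinGluing

open FortinGluing in
theorem stmt7_general
    {V Q : Type*}
    [NormedAddCommGroup V] [InnerProductSpace ℝ V]
    [NormedAddCommGroup Q] [NormedSpace ℝ Q]
    {κ : Type*} [Fintype κ]
    (Vh : Submodule ℝ V)
    (Vh0 : κ → Submodule ℝ V) (hVh0 : ∀ k, Vh0 k ≤ Vh)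
    (Qt : Submodule ℝ Q) (Qloc : κ → Submodule ℝ Q)
    (b : V →L[ℝ] Q →L[ℝ] ℝ)
    -- `Q_h = Q̃_h ⊕ (⊕_K Q_h(K))`: every pressure decomposes
    (hQdecomp : ∀ q : Q, ∃ qt ∈ Qt, ∃ ql : κ → Q,
      (∀ k, ql k ∈ Qloc k) ∧ q = qt + ∑ k, ql k)
    -- (a) the macro-level Fortin operator
    (It : V →L[ℝ] V)
    (hItVh : ∀ v : V, It v ∈ Vh)
    (hItid : ∀ v ∈ Vh, It v = v)
    (hItb : ∀ v : V, ∀ qt ∈ Qt, b (It v) qt = b v qt)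
    -- (b) the local Fortin operators
    (J : κ → (V →L[ℝ] V))
    (hJrange : ∀ k (v : V), J k v ∈ Vh0 k)
    (hJb : ∀ k (v : V), ∀ q ∈ Qloc k, b (J k v) q = b v q)
    -- (c) localisation assumptions
    (hzero_t : ∀ k, ∀ w ∈ Vh0 k, ∀ qt ∈ Qt, b w qt = 0)
    (hzero_cross : ∀ k k', k ≠ k' → ∀ w ∈ Vh0 k, ∀ q ∈ Qloc k', b w q = 0) :
    (∀ v : V, (It v + ∑ k, J k (v - It v)) ∈ Vh) ∧
    (∀ vh ∈ Vh, It vh + ∑ k, J k (vh - It vh) = vh) ∧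
    (∀ (v : V) (q : Q), b (It v + ∑ k, J k (v - It v)) q = b v q) := by
  let G := glue (It : V →ₗ[ℝ] V) fun k => (J k : V →ₗ[ℝ] V)
  have hG (v : V) : G v = It v + ∑ k, J k (v - It v) := glue_apply v
  have hmacro : Qt ≤ fortinSubmodule b.toLinearMap₁₂ G :=
    le_fortinSubmodule_glue_of_macro (fun _ hq => mem_fortinSubmodule.2 fun v => hItb v _ hq)
      fun k v => hzero_t k _ (hJrange k v)
  have hlocal (k : κ) : Qloc k ≤ fortinSubmodule b.toLinearMap₁₂ G :=
    le_fortinSubmodule_glue_of_local k (fun _ hq => mem_fortinSubmodule.2 fun v => hJb k v _ hq)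
      fun l hl v => hzero_cross l k hl _ (hJrange l v)
  refine ⟨fun v => ?_, fun vh hvh => ?_, fun v q => ?_⟩
  · rw [← hG]
    exact glue_mem hItVh (fun k v => hVh0 k (hJrange k v)) v
  · rw [← hG]
    exact glue_apply_of_apply_eq_self (hItid vh hvh)
  · obtain ⟨qt, hqt, ql, hql, rfl⟩ := hQdecomp q
    have hq : qt + ∑ k, ql k ∈ fortinSubmodule b.toLinearMap₁₂ G :=
      add_mem (hmacro hqt) (Submodule.sum_mem _ fun k _ => hlocal k (hql k))
    rw [← hG]
    exact mem_fortinSubmodule.1 hq v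

/-- gluing of Fortin operators.  Given a macro-level Fortin operator
`Ĩ_h = It` preserving `b` against the macro-constant pressures `Q̃_h = Qt`, and
local Fortin operators `J k` (the composites `ι_K ∘ I_h^K ∘ r_K`) valued in the
local spaces `V_{h,0}(K)`, preserving `b` against local pressures `Q_h(K)`, with
the localisation assumptions that local corrections do not interact with
macro-constant pressures nor with local pressures of other macro cells, the glued
operator `I_h(v) = Ĩ_h v + Σ_K J_K (v − Ĩ_h v)` maps into `V_h`, restricts to the
identity on `V_h`, and preserves `b` against all of `Q_h`. -/
theorem stmt7
    {V Q : Type*}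
    [NormedAddCommGroup V] [InnerProductSpace ℝ V] [CompleteSpace V]
    [NormedAddCommGroup Q] [NormedSpace ℝ Q]
    {κ : Type*} [Fintype κ]
    (Vh : Submodule ℝ V) [FiniteDimensional ℝ Vh]
    (Vh0 : κ → Submodule ℝ V) (hVh0 : ∀ k, Vh0 k ≤ Vh)
    (Qt : Submodule ℝ Q) (Qloc : κ → Submodule ℝ Q)
    (b : V →L[ℝ] Q →L[ℝ] ℝ)
    -- `Q_h = Q̃_h ⊕ (⊕_K Q_h(K))`: every pressure decomposes
    (hQdecomp : ∀ q : Q, ∃ qt ∈ Qt, ∃ ql : κ → Q,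
      (∀ k, ql k ∈ Qloc k) ∧ q = qt + ∑ k, ql k)
    -- (a) the macro-level Fortin operator
    (It : V →L[ℝ] V)
    (hItVh : ∀ v : V, It v ∈ Vh)
    (hItid : ∀ v ∈ Vh, It v = v)
    (hItb : ∀ v : V, ∀ qt ∈ Qt, b (It v) qt = b v qt)
    -- (b) the local Fortin operators
    (J : κ → (V →L[ℝ] V))
    (hJrange : ∀ k (v : V), J k v ∈ Vh0 k)
    (hJid : ∀ k, ∀ w ∈ Vh0 k, J k w = w)
    (hJb : ∀ k (v : V), ∀ q ∈ Qloc k, b (J k v) q = b v q)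
    -- (c) localisation assumptions
    (hzero_t : ∀ k, ∀ w ∈ Vh0 k, ∀ qt ∈ Qt, b w qt = 0)
    (hzero_cross : ∀ k k', k ≠ k' → ∀ w ∈ Vh0 k, ∀ q ∈ Qloc k', b w q = 0) :
    (∀ v : V, (It v + ∑ k, J k (v - It v)) ∈ Vh) ∧
    (∀ vh ∈ Vh, It vh + ∑ k, J k (vh - It vh) = vh) ∧
    (∀ (v : V) (q : Q), b (It v + ∑ k, J k (v - It v)) q = b v q) :=
  stmt7_general Vh Vh0 hVh0 Qt Qloc b hQdecomp It hItVh hItid hItb J hJrange hJb hzero_t hzero_cross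
end

section
/- Parameter-dependent Jacobi bound: Let V_h be a finite element space spanned by basis functions {φ_i} and a_{h,γ}(u,v) = a(u,v) + γ c(u,v) with a(u,u) ≤ C₁‖u‖_1^2, c(u,u) ≤ C₁‖u‖_1^2, the inverse inequality ‖u‖_1 ≤ C₂ h^{-1}‖u‖_0 on V_h, and the L² stability of the basis Σ_i ‖u_i‖_0^2 ≤ C₃ ‖u_h‖_0^2 for the unique decomposition u_h = Σ_i u_i along one-dimensional subspaces V_i = span{φ_i}. If moreover ‖u_h‖_0^2 ≤ C₄ a_{h,γ}(u_h, u_h), then the Jacobi additive Schwarz operator D_{h,γ} satisfies ‖u_h‖_{D_{h,γ}}^2 ≤ C (1+γ) h^{-2} ‖u_h‖_{A_{h,γ}}^2 with C = 2C₁C₂²C₃C₄, i.e. the equivalence constant degrades linearly in γ. -/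
/-!
On each one-dimensional piece `vᵢ = uᵢ φᵢ` the continuity bounds and the inverse inequality give
`a(vᵢ, vᵢ) + γ c(vᵢ, vᵢ) ≤ C₁ (1 + γ) C₂² h⁻² ‖vᵢ‖₀²`; summing and using the `L²` stability of the
basis bounds the Jacobi form by `C₁ C₂² C₃ (1 + γ) h⁻² ‖u‖₀²`, and the lower bound
`‖u‖₀² ≤ C₄ a_{h,γ}(u, u)` closes the estimate. The factor `2` is slack.
-/

open Finset

section

variable {V : Type*} [AddCommGroup V] [Module ℝ V]

theorem add_mul_le_of_inverse_inequality {a c : V →ₗ[ℝ] V →ₗ[ℝ] ℝ} {n0 n1 : V → ℝ}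
    {γ C₁ C₂ : ℝ} {v : V} (hγ : 0 ≤ γ) (hC₁ : 0 ≤ C₁) (hn1 : 0 ≤ n1 v)
    (ha : a v v ≤ C₁ * n1 v ^ 2) (hc : c v v ≤ C₁ * n1 v ^ 2) (hinv : n1 v ≤ C₂ * n0 v) :
    a v v + γ * c v v ≤ C₁ * (1 + γ) * C₂ ^ 2 * n0 v ^ 2 := by
  have hsq : n1 v ^ 2 ≤ C₂ ^ 2 * n0 v ^ 2 := by
    rw [← mul_pow]
    exact pow_le_pow_left₀ hn1 hinv 2
  calc a v v + γ * c v v ≤ C₁ * n1 v ^ 2 + γ * (C₁ * n1 v ^ 2) := by gcongr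
    _ = C₁ * (1 + γ) * n1 v ^ 2 := by ring
    _ ≤ C₁ * (1 + γ) * (C₂ ^ 2 * n0 v ^ 2) := by gcongr
    _ = C₁ * (1 + γ) * C₂ ^ 2 * n0 v ^ 2 := by ring

theorem Module.Basis.sum_repr_smul_le_of_le_mul_sq {ι : Type*} [Fintype ι]
    (φ : Module.Basis ι ℝ V) {q n : V → ℝ} {K C : ℝ} (u : V) (hK : 0 ≤ K)
    (hq : ∀ v, q v ≤ K * n v ^ 2) (hstab : ∑ i, n (φ.repr u i • φ i) ^ 2 ≤ C * n u ^ 2) :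
    ∑ i, q (φ.repr u i • φ i) ≤ K * C * n u ^ 2 :=
  calc ∑ i, q (φ.repr u i • φ i) ≤ ∑ i, K * n (φ.repr u i • φ i) ^ 2 :=
        sum_le_sum fun i _ => hq _
    _ = K * ∑ i, n (φ.repr u i • φ i) ^ 2 := by rw [mul_sum]
    _ ≤ K * (C * n u ^ 2) := by gcongr
    _ = K * C * n u ^ 2 := by ring

end

theorem stmt10_general
    {V : Type*} [AddCommGroup V] [Module ℝ V]
    {ι : Type*} [Fintype ι]
    (φ : Module.Basis ι ℝ V)
    (a c : V →ₗ[ℝ] V →ₗ[ℝ] ℝ)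
    (hapos : ∀ u, 0 ≤ a u u) (hcpos : ∀ u, 0 ≤ c u u)
    (n0 n1 : V → ℝ)
    (hn1nonneg : ∀ u, 0 ≤ n1 u)
    (γ h C₁ C₂ C₃ C₄ : ℝ)
    (hγ : 0 ≤ γ)
    (hC₁ : 0 < C₁) (hC₃ : 0 < C₃)
    (ha : ∀ u, a u u ≤ C₁ * (n1 u) ^ 2)
    (hc : ∀ u, c u u ≤ C₁ * (n1 u) ^ 2)
    -- inverse inequality on `V_h`
    (hinv : ∀ u, n1 u ≤ C₂ * h⁻¹ * n0 u)
    -- `L²` stability of the basis decomposition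
    (hbasis : ∀ u : V, ∑ i, (n0 (φ.repr u i • φ i)) ^ 2 ≤ C₃ * (n0 u) ^ 2)
    (hlower : ∀ u : V, (n0 u) ^ 2 ≤ C₄ * (a u u + γ * c u u)) :
    ∀ u : V,
      ∑ i, (a (φ.repr u i • φ i) (φ.repr u i • φ i)
              + γ * c (φ.repr u i • φ i) (φ.repr u i • φ i)) ≤
        2 * C₁ * C₂ ^ 2 * C₃ * C₄ * (1 + γ) * h⁻¹ ^ 2 * (a u u + γ * c u u) := by
  intro u
  set K := C₁ * (1 + γ) * (C₂ * h⁻¹) ^ 2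
  have hK : 0 ≤ K := by positivity
  have hjacobi : ∑ i, (a (φ.repr u i • φ i) (φ.repr u i • φ i)
      + γ * c (φ.repr u i • φ i) (φ.repr u i • φ i)) ≤ K * C₃ * n0 u ^ 2 :=
    φ.sum_repr_smul_le_of_le_mul_sq (q := fun v => a v v + γ * c v v) u hK
      (fun v => add_mul_le_of_inverse_inequality hγ hC₁.le (hn1nonneg v) (ha v) (hc v)
        (by simpa only [mul_assoc] using hinv v)) (hbasis u)
  have hjacobi_nonneg : 0 ≤ ∑ i, (a (φ.repr u i • φ i) (φ.repr u i • φ i)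
      + γ * c (φ.repr u i • φ i) (φ.repr u i • φ i)) :=
    sum_nonneg fun i _ => add_nonneg (hapos _) (mul_nonneg hγ (hcpos _))
  have hlower' : K * C₃ * n0 u ^ 2 ≤ K * C₃ * (C₄ * (a u u + γ * c u u)) := by
    gcongr
    exact hlower u
  calc _ ≤ K * C₃ * (C₄ * (a u u + γ * c u u)) := hjacobi.trans hlower'
    _ ≤ 2 * (K * C₃ * (C₄ * (a u u + γ * c u u))) := by linarith
    _ = _ := by ring

/-- parameter-dependent Jacobi bound.  For the unique decomposition
of `u` along the one-dimensional subspaces spanned by the basis `{φ_i}`, the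
Jacobi additive Schwarz quadratic form satisfies
`‖u‖²_{D_{h,γ}} ≤ 2C₁C₂²C₃C₄ (1+γ) h⁻² ‖u‖²_{A_{h,γ}}`. -/
theorem stmt10
    {V : Type*} [AddCommGroup V] [Module ℝ V]
    {ι : Type*} [Fintype ι]
    (φ : Module.Basis ι ℝ V)
    (a c : V →ₗ[ℝ] V →ₗ[ℝ] ℝ)
    (hasym : ∀ u v, a u v = a v u) (hcsym : ∀ u v, c u v = c v u)
    (hapos : ∀ u, 0 ≤ a u u) (hcpos : ∀ u, 0 ≤ c u u)
    (n0 n1 : V → ℝ)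
    (hn0nonneg : ∀ u, 0 ≤ n0 u) (hn1nonneg : ∀ u, 0 ≤ n1 u)
    (γ h C₁ C₂ C₃ C₄ : ℝ)
    (hγ : 0 ≤ γ) (hh : 0 < h)
    (hC₁ : 0 < C₁) (hC₂ : 0 < C₂) (hC₃ : 0 < C₃) (hC₄ : 0 < C₄)
    (ha : ∀ u, a u u ≤ C₁ * (n1 u) ^ 2)
    (hc : ∀ u, c u u ≤ C₁ * (n1 u) ^ 2)
    -- inverse inequality on `V_h`
    (hinv : ∀ u, n1 u ≤ C₂ * h⁻¹ * n0 u)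
    -- `L²` stability of the basis decomposition
    (hbasis : ∀ u : V, ∑ i, (n0 (φ.repr u i • φ i)) ^ 2 ≤ C₃ * (n0 u) ^ 2)
    (hlower : ∀ u : V, (n0 u) ^ 2 ≤ C₄ * (a u u + γ * c u u)) :
    ∀ u : V,
      ∑ i, (a (φ.repr u i • φ i) (φ.repr u i • φ i)
              + γ * c (φ.repr u i • φ i) (φ.repr u i • φ i)) ≤
        2 * C₁ * C₂ ^ 2 * C₃ * C₄ * (1 + γ) * h⁻¹ ^ 2 * (a u u + γ * c u u) :=
  stmt10_general φ a c hapos hcpos n0 n1 hn1nonneg γ h C₁ C₂ C₃ C₄ hγ hC₁ hC₃ ha hc hinv hbasis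
    hlower
end

section
/- Robust prolongation continuity: Let V_H, V_h be finite-dimensional Hilbert spaces with energy norms ‖u‖_{A_{H,γ}}^2 = ‖u‖_{1,H}^2 + γ‖Π_{Q_H} div_H u‖_0^2 and ‖u‖_{A_{h,γ}}^2 = ‖u‖_{1,h}^2 + γ‖Π_{Q_h} div_h u‖_0^2. Suppose Q_h = Q̃_H ⊕ Q̂_h orthogonally with Q̃_H ⊆ Q_H; P_H : V_H → V_h is ‖·‖_1-bounded and satisfies Π_{Q̃_H} div_h (P_H v_H) = Π_{Q̃_H} div_H v_H; V̂_h ⊆ V_h satisfies Π_{Q̃_H} div_h v̂ = 0 for all v̂ ∈ V̂_h; and there is a bounded linear operator I : V_h → V̂_h with Π_{Q̂_h} div_h (I v) = Π_{Q̂_h} div_h v. For u_H ∈ V_H let ũ_h ∈ V̂_h be the unique minimizer of J(v) = a_h(v,v) + γ ‖Π_{Q̂_h} div_h(P_H u_H − v)‖_0^2 over V̂_h, where a_h(v,v) is equivalent to ‖v‖_{1,h}^2. Then ‖P_H u_H − ũ_h‖_{A_{h,γ}}^2 ≤ C ‖u_H‖_{A_{H,γ}}^2 with C independent of γ ≥ 0.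 -/
open scoped RealInnerProductSpace

/-! Testing the minimisation against `I (P u_H) ∈ V̂_h`, whose penalty vanishes, bounds both
`a_h(ũ_h, ũ_h)` and `γ ‖Π_{Q̂_h} div_h (P u_H − ũ_h)‖²` by a multiple of `‖u_H‖₁²`, uniformly in
`γ`; the parallelogram law for `a_h` then controls `‖P u_H − ũ_h‖₁`. For the divergence, split
`div_h (P u_H − ũ_h) ∈ Q̃_H ⊕ Q̂_h` orthogonally: the `Q̃_H`-part is `Π_{Q̃_H} div_H u_H`, since `P`
preserves it and `V̂_h` annihilates it, so it is bounded by `‖div_H u_H‖`, while the `Q̂_h`-part is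
the penalty already bounded. -/

theorem Submodule.norm_sq_eq_of_mem_sup_of_isOrtho {𝕜 E : Type*} [RCLike 𝕜]
    [NormedAddCommGroup E] [InnerProductSpace 𝕜 E] {K L : Submodule 𝕜 E}
    [K.HasOrthogonalProjection] [L.HasOrthogonalProjection] (hKL : K ⟂ L) {x : E}
    (hx : x ∈ K ⊔ L) :
    ‖x‖ ^ 2 = ‖K.starProjection x‖ ^ 2 + ‖L.starProjection x‖ ^ 2 := by
  obtain ⟨a, ha, b, hb, rfl⟩ := mem_sup.mp hx
  have hKb : K.starProjection b = 0 := K.starProjection_apply_eq_zero_iff.mpr (hKL.symm hb)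
  have hLa : L.starProjection a = 0 := L.starProjection_apply_eq_zero_iff.mpr (hKL ha)
  rw [map_add, map_add, hKb, hLa, starProjection_eq_self_iff.mpr ha,
    starProjection_eq_self_iff.mpr hb, add_zero, zero_add, @norm_add_sq 𝕜,
    isOrtho_iff_inner_eq.mp hKL a ha b hb, map_zero, mul_zero, add_zero]

theorem LinearMap.BilinForm.apply_sub_sub_le {R M : Type*} [CommRing R] [PartialOrder R]
    [IsOrderedAddMonoid R] [AddCommGroup M] [Module R M] (B : LinearMap.BilinForm R M)
    {x y : M} (h : 0 ≤ B (x + y) (x + y)) :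
    B (x - y) (x - y) ≤ 2 * B x x + 2 * B y y := by
  have hpar : B (x - y) (x - y) + B (x + y) (x + y) = 2 * B x x + 2 * B y y := by
    simp only [map_sub, map_add, LinearMap.sub_apply, LinearMap.add_apply]
    ring
  rw [← hpar]
  exact le_add_of_nonneg_right h

theorem sq_le_mul_sq_of_le_mul {R : Type*} [CommSemiring R] [PartialOrder R] [IsOrderedRing R]
    {a b c : R} (ha : 0 ≤ a) (h : a ≤ c * b) : a ^ 2 ≤ c ^ 2 * b ^ 2 := by
  rw [← mul_pow]
  exact pow_le_pow_left₀ ha h 2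

theorem Submodule.norm_sq_le_of_starProjection_eq {𝕜 E : Type*} [RCLike 𝕜]
    [NormedAddCommGroup E] [InnerProductSpace 𝕜 E] {K L : Submodule 𝕜 E}
    [K.HasOrthogonalProjection] [L.HasOrthogonalProjection] (hKL : K ⟂ L) {x y : E} (hx : x ∈ K ⊔ L)
    (hxy : K.starProjection x = K.starProjection y) :
    ‖x‖ ^ 2 ≤ ‖y‖ ^ 2 + ‖L.starProjection x‖ ^ 2 := by
  rw [norm_sq_eq_of_mem_sup_of_isOrtho hKL hx, hxy]
  grw [K.norm_starProjection_apply_le y]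

theorem add_le_mul_add_of_mul_le {𝕜 : Type*} [Field 𝕜] [LinearOrder 𝕜] [IsStrictOrderedRing 𝕜]
    {x y a b c m d : 𝕜} (hc : 0 < c) (hx : c * x ≤ a * m)
    (hy : y ≤ d + b * m) (ha : 0 ≤ a) (hb : 0 ≤ b) (hm : 0 ≤ m) (hd : 0 ≤ d) :
    x + y ≤ (a / c + b + 1) * (m + d) := by
  have hx' : x ≤ a / c * m := by
    rw [div_mul_eq_mul_div, le_div_iff₀ hc]
    linarith
  nlinarith [mul_nonneg (add_nonneg (div_nonneg ha hc.le) hb) hd]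

theorem stmt11_general
    {VH Vh Q0 : Type*}
    [NormedAddCommGroup VH] [InnerProductSpace ℝ VH]
    [NormedAddCommGroup Vh] [InnerProductSpace ℝ Vh]
    [NormedAddCommGroup Q0] [InnerProductSpace ℝ Q0] [FiniteDimensional ℝ Q0]
    (Qh Qt Qhat : Submodule ℝ Q0)
    (horth : ∀ qt ∈ Qt, ∀ qh ∈ Qhat, ⟪qt, qh⟫ = (0 : ℝ))
    (hQsum : Qt ⊔ Qhat = Qh)
    (divH : VH →ₗ[ℝ] Q0) (divh : Vh →ₗ[ℝ] Q0)
    (hdivh : ∀ v, divh v ∈ Qh)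
    (n1H : VH → ℝ) (n1h : Vh → ℝ)
    (hn1hnonneg : ∀ v, 0 ≤ n1h v)
    (ah : Vh →ₗ[ℝ] Vh →ₗ[ℝ] ℝ)
    (ca cb CP CI : ℝ) (hca : 0 < ca) (hcb : 0 < cb)
    (hahlow : ∀ v, ca * (n1h v) ^ 2 ≤ ah v v)
    (hahup : ∀ v, ah v v ≤ cb * (n1h v) ^ 2)
    (P : VH →ₗ[ℝ] Vh)
    (hPbdd : ∀ v, n1h (P v) ≤ CP * n1H v)
    (hPdiv : ∀ v : VH, (Qt.orthogonalProjection (divh (P v)) : Q0) =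
      (Qt.orthogonalProjection (divH v) : Q0))
    (Vhat : Submodule ℝ Vh)
    (hVhatdiv : ∀ v ∈ Vhat, (Qt.orthogonalProjection (divh v) : Q0) = 0)
    (I : Vh →ₗ[ℝ] Vh)
    (hIrange : ∀ v, I v ∈ Vhat)
    (hIbdd : ∀ v, n1h (I v) ≤ CI * n1h v)
    (hIdiv : ∀ v : Vh, (Qhat.orthogonalProjection (divh (I v)) : Q0) =
      (Qhat.orthogonalProjection (divh v) : Q0)) :
    ∃ C : ℝ, 0 < C ∧ ∀ γ : ℝ, 0 ≤ γ → ∀ uH : VH, ∀ ut : Vh,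
      ut ∈ Vhat →
      -- `ut` minimises `J(v) = a_h(v,v) + γ ‖Π_{Q̂_h} div_h (P u_H − v)‖²` over `V̂_h`
      (∀ v ∈ Vhat,
        ah ut ut + γ * ‖(Qhat.orthogonalProjection (divh (P uH - ut)) : Q0)‖ ^ 2 ≤
          ah v v + γ * ‖(Qhat.orthogonalProjection (divh (P uH - v)) : Q0)‖ ^ 2) →
      (n1h (P uH - ut)) ^ 2 + γ * ‖divh (P uH - ut)‖ ^ 2 ≤
        C * ((n1H uH) ^ 2 + γ * ‖divH uH‖ ^ 2) := by
  refine ⟨2 * (cb * CP ^ 2 + cb * (CI * CP) ^ 2) / ca + cb * (CI * CP) ^ 2 + 1, by positivity, ?_⟩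
  intro γ hγ uH ut hut hmin
  simp only [← Submodule.starProjection_apply] at hPdiv hVhatdiv hIdiv hmin
  have hah_nonneg (v : Vh) : 0 ≤ ah v v := (by positivity : 0 ≤ ca * n1h v ^ 2).trans (hahlow v)
  have hPuH : n1h (P uH) ^ 2 ≤ CP ^ 2 * n1H uH ^ 2 :=
    sq_le_mul_sq_of_le_mul (hn1hnonneg _) (hPbdd uH)
  have hah_PuH : ah (P uH) (P uH) ≤ cb * CP ^ 2 * n1H uH ^ 2 := by
    grw [hahup, hPuH, mul_assoc]
  have hah_IPuH : ah (I (P uH)) (I (P uH)) ≤ cb * (CI * CP) ^ 2 * n1H uH ^ 2 := by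
    grw [hahup, sq_le_mul_sq_of_le_mul (hn1hnonneg _) (hIbdd _), hPuH]
    exact le_of_eq (by ring)
  have hJ : ah ut ut + γ * ‖Qhat.starProjection (divh (P uH - ut))‖ ^ 2 ≤
      cb * (CI * CP) ^ 2 * n1H uH ^ 2 := by
    have hpenalty_I : Qhat.starProjection (divh (P uH - I (P uH))) = 0 := by
      rw [map_sub, map_sub, hIdiv, sub_self]
    have hmin_I := hmin _ (hIrange (P uH))
    rw [hpenalty_I, norm_zero] at hmin_I
    linarith
  have hn1 : ca * n1h (P uH - ut) ^ 2 ≤ 2 * (cb * CP ^ 2 + cb * (CI * CP) ^ 2) * n1H uH ^ 2 := by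
    grw [hahlow, LinearMap.BilinForm.apply_sub_sub_le ah (hah_nonneg _)]
    nlinarith
  have hdiv : ‖divh (P uH - ut)‖ ^ 2 ≤
      ‖divH uH‖ ^ 2 + ‖Qhat.starProjection (divh (P uH - ut))‖ ^ 2 :=
    Submodule.norm_sq_le_of_starProjection_eq (Submodule.isOrtho_iff_inner_eq.mpr horth)
      (hQsum ▸ hdivh _) (by rw [map_sub, map_sub, hPdiv, hVhatdiv ut hut, sub_zero])
  refine add_le_mul_add_of_mul_le hca hn1 ?_ (by positivity) (by positivity) (by positivity)
    (by positivity)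
  grw [hdiv, mul_add]
  linarith [hah_nonneg ut]

/-- robust prolongation continuity.  With
`Q_h = Q̃_H ⊕ Q̂_h` (orthogonally), `Q̃_H ⊆ Q_H`, a `‖·‖₁`-bounded prolongation
`P` preserving the divergence against `Q̃_H`, a correction space `V̂_h` whose
divergences vanish against `Q̃_H`, and a bounded operator `I` into `V̂_h`
preserving the `Q̂_h`-part of the divergence, the corrected prolongation
`ũ ↦ P u_H − ũ` (with `ũ` the minimiser of the penalised energy over `V̂_h`)
is continuous in the `γ`-energy norms with a constant independent of `γ ≥ 0`. -/
theorem stmt11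
    {VH Vh Q0 : Type*}
    [NormedAddCommGroup VH] [InnerProductSpace ℝ VH] [FiniteDimensional ℝ VH]
    [NormedAddCommGroup Vh] [InnerProductSpace ℝ Vh] [FiniteDimensional ℝ Vh]
    [NormedAddCommGroup Q0] [InnerProductSpace ℝ Q0] [FiniteDimensional ℝ Q0]
    (QH Qh Qt Qhat : Submodule ℝ Q0)
    (hQtQH : Qt ≤ QH) (hQtQh : Qt ≤ Qh) (hQhatQh : Qhat ≤ Qh)
    (horth : ∀ qt ∈ Qt, ∀ qh ∈ Qhat, ⟪qt, qh⟫ = (0 : ℝ))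
    (hQsum : Qt ⊔ Qhat = Qh)
    (divH : VH →ₗ[ℝ] Q0) (divh : Vh →ₗ[ℝ] Q0)
    (hdivH : ∀ v, divH v ∈ QH) (hdivh : ∀ v, divh v ∈ Qh)
    (n1H : VH → ℝ) (n1h : Vh → ℝ)
    (hn1Hnonneg : ∀ v, 0 ≤ n1H v) (hn1hnonneg : ∀ v, 0 ≤ n1h v)
    (ah : Vh →ₗ[ℝ] Vh →ₗ[ℝ] ℝ)
    (ca cb CP CI : ℝ) (hca : 0 < ca) (hcb : 0 < cb) (hCP : 0 < CP) (hCI : 0 < CI)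
    (hahlow : ∀ v, ca * (n1h v) ^ 2 ≤ ah v v)
    (hahup : ∀ v, ah v v ≤ cb * (n1h v) ^ 2)
    (P : VH →ₗ[ℝ] Vh)
    (hPbdd : ∀ v, n1h (P v) ≤ CP * n1H v)
    (hPdiv : ∀ v : VH, (Qt.orthogonalProjection (divh (P v)) : Q0) =
      (Qt.orthogonalProjection (divH v) : Q0))
    (Vhat : Submodule ℝ Vh)
    (hVhatdiv : ∀ v ∈ Vhat, (Qt.orthogonalProjection (divh v) : Q0) = 0)
    (I : Vh →ₗ[ℝ] Vh)
    (hIrange : ∀ v, I v ∈ Vhat)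
    (hIbdd : ∀ v, n1h (I v) ≤ CI * n1h v)
    (hIdiv : ∀ v : Vh, (Qhat.orthogonalProjection (divh (I v)) : Q0) =
      (Qhat.orthogonalProjection (divh v) : Q0)) :
    ∃ C : ℝ, 0 < C ∧ ∀ γ : ℝ, 0 ≤ γ → ∀ uH : VH, ∀ ut : Vh,
      ut ∈ Vhat →
      -- `ut` minimises `J(v) = a_h(v,v) + γ ‖Π_{Q̂_h} div_h (P u_H − v)‖²` over `V̂_h`
      (∀ v ∈ Vhat,
        ah ut ut + γ * ‖(Qhat.orthogonalProjection (divh (P uH - ut)) : Q0)‖ ^ 2 ≤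
          ah v v + γ * ‖(Qhat.orthogonalProjection (divh (P uH - v)) : Q0)‖ ^ 2) →
      (n1h (P uH - ut)) ^ 2 + γ * ‖divh (P uH - ut)‖ ^ 2 ≤
        C * ((n1H uH) ^ 2 + γ * ‖divH uH‖ ^ 2) :=
  stmt11_general Qh Qt Qhat horth hQsum divH divh hdivh n1H n1h hn1hnonneg ah ca cb CP CI hca hcb
    hahlow hahup P hPbdd hPdiv Vhat hVhatdiv I hIrange hIbdd hIdiv
end
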